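/- Let p be a probability potential on a family of compatible frames and let Λ ≤ Θ ≤ d(p). Then: (1) [π_Λ(p)] ≤ [p_{Θ|Λ}]; (2) π_Λ(p_{Θ|Λ}) = f_{π_Λ(p)}; (3) if Λ₂ ≤ Λ₁ ≤ Θ, then p_{Θ|Λ₂} = p_{Θ|Λ₁} · p_{Λ₁|Λ₂}; (4) if Λ ≤ Θ₁ ≤ Θ, then π_{Θ₁}(p_{Θ|Λ}) = p_{Θ₁|Λ}; (5) if Θ₁ ≤ Λ₁, Λ₂ ≤ Θ, then π_{Λ₁}(p_{Θ|Λ₂} · p_{Λ₂|Θ₁}) = p_{Λ₁|Θ₁}; (6) if p₂ is a potential with d(p₂) = Λ, then (π_Θ(p₁) · p₂)_{Θ|Λ} = p₁_{Θ|Λ} · f_{p₂} for any potential p₁ with Θ ≤ d(p₁). -/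

import Mathlib

open scoped NNReal

/-- A family of compatible frames (f.c.f.): a collection of finite nonempty frames
together with (unique) refinings between them, closed under composition, containing
identities, with minimal common refinements (binary joins). -/
structure FCF where
  /-- the frames of the family -/
  Frame : Type
  /-- the elements of each frame -/
  El : Frame → Type
  elFintype : ∀ Θ, Fintype (El Θ)
  elNonempty : ∀ Θ, Nonempty (El Θ)
  /-- `le Θ Λ` holds iff the family contains a refining of `Θ` to `Λ`. -/
  le : Frame → Frame → Prop
  le_refl : ∀ Θ, le Θ Θ
  le_trans : ∀ {Θ Λ Ξ}, le Θ Λ → le Λ Ξ → le Θ Ξ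
  le_antisymm : ∀ {Θ Λ}, le Θ Λ → le Λ Θ → Θ = Λ
  /-- the (unique) refining map of `Θ` to `Λ`, when `le Θ Λ` -/
  τ : ∀ {Θ Λ}, le Θ Λ → El Θ → Set (El Λ)
  τ_nonempty : ∀ {Θ Λ} (h : le Θ Λ) (θ : El Θ), (τ h θ).Nonempty
  τ_disjoint : ∀ {Θ Λ} (h : le Θ Λ) (θ θ' : El Θ), θ ≠ θ' → τ h θ ∩ τ h θ' = ∅
  τ_cover : ∀ {Θ Λ} (h : le Θ Λ) (x : El Λ), ∃ θ, x ∈ τ h θ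
  /-- the identity refining -/
  τ_refl : ∀ {Θ} (h : le Θ Θ) (θ : El Θ), τ h θ = {θ}
  /-- closure under composition of refinings -/
  τ_comp : ∀ {Θ Λ Ξ} (h₁ : le Θ Λ) (h₂ : le Λ Ξ) (h₃ : le Θ Ξ) (θ : El Θ),
    τ h₃ θ = ⋃ lam ∈ τ h₁ θ, τ h₂ lam
  /-- identity of coarsenings: two coarsenings of a frame with the same blocks coincide -/
  coarsening_unique : ∀ {Θ₁ Θ₂ Λ} (h₁ : le Θ₁ Λ) (h₂ : le Θ₂ Λ),
    (∀ θ₁, ∃ θ₂, τ h₁ θ₁ = τ h₂ θ₂) → (∀ θ₂, ∃ θ₁, τ h₁ θ₁ = τ h₂ θ₂) → Θ₁ = Θ₂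
  /-- minimal common refinement of two frames -/
  sup : Frame → Frame → Frame
  le_sup_left : ∀ Θ Λ, le Θ (sup Θ Λ)
  le_sup_right : ∀ Θ Λ, le Λ (sup Θ Λ)
  sup_le : ∀ {Θ Λ Ξ}, le Θ Ξ → le Λ Ξ → le (sup Θ Λ) Ξ
  /-- every element of the minimal common refinement is the (unique) intersection point
  of a block of each factor -/
  sup_atom : ∀ {Θ Λ} (h₁ : le Θ (sup Θ Λ)) (h₂ : le Λ (sup Θ Λ)) (x : El (sup Θ Λ)),
    ∃ (θ : El Θ) (lam : El Λ), τ h₁ θ ∩ τ h₂ lam = {x}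

namespace FCF

instance (F : FCF) (Θ : F.Frame) : Fintype (F.El Θ) := F.elFintype Θ

instance (F : FCF) (Θ : F.Frame) : Nonempty (F.El Θ) := F.elNonempty Θ

instance instSemilatticeSup (F : FCF) : SemilatticeSup F.Frame where
  le := F.le
  le_refl := F.le_refl
  le_trans := fun _ _ _ => F.le_trans
  le_antisymm := fun _ _ => F.le_antisymm
  sup := F.sup
  le_sup_left := F.le_sup_left
  le_sup_right := F.le_sup_right
  sup_le := fun _ _ _ h h' => F.sup_le h h'

/-- the indicator potential `f_p` of the support of a potential -/
noncomputable def fpot {X : Type} (p : X → ℝ≥0) : X → ℝ≥0 := fun x =>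
  haveI := Classical.propDecidable (0 < p x)
  if 0 < p x then 1 else 0

/-- the support of a potential -/
def psupp {X : Type} (p : X → ℝ≥0) : Set X := {x | 0 < p x}

/-- the likelihood (plausibility of singletons) function of a set potential -/
noncomputable def plfn {X : Type} (m : Set X → ℝ≥0) : X → ℝ≥0 :=
  fun x => ∑ᶠ (S : Set X) (_ : x ∈ S), m S

variable (F : FCF)

/-- `θ` and `lam` are compatible: their refinings to the minimal common refinement
of the two frames intersect. -/
def compat {Θ Λ : F.Frame} (θ : F.El Θ) (lam : F.El Λ) : Prop :=
  (F.τ (F.le_sup_left Θ Λ) θ ∩ F.τ (F.le_sup_right Θ Λ) lam).Nonempty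

/-- `(θ₁, θ₂, lam) ∈ R(Θ₁, Θ₂, Λ)`: joint compatibility of a triple. -/
def compat3 {Θ₁ Θ₂ Λ : F.Frame} (θ₁ : F.El Θ₁) (θ₂ : F.El Θ₂) (lam : F.El Λ) : Prop :=
  (F.τ (F.le_trans (F.le_sup_left Θ₁ Θ₂) (F.le_sup_left (F.sup Θ₁ Θ₂) Λ)) θ₁ ∩
    F.τ (F.le_trans (F.le_sup_right Θ₁ Θ₂) (F.le_sup_left (F.sup Θ₁ Θ₂) Λ)) θ₂ ∩
    F.τ (F.le_sup_right (F.sup Θ₁ Θ₂) Λ) lam).Nonempty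

/-- `Θ₁ ⊥ Θ₂ | Λ` : conditional independence of two frames given a third,
`R_λ(Θ₁,Θ₂) = R_λ(Θ₁) × R_λ(Θ₂)` for every `λ ∈ Λ`. -/
def CondIndep (Θ₁ Θ₂ Λ : F.Frame) : Prop :=
  ∀ (lam : F.El Λ) (θ₁ : F.El Θ₁) (θ₂ : F.El Θ₂),
    F.compat3 θ₁ θ₂ lam ↔ (F.compat θ₁ lam ∧ F.compat θ₂ lam)

/-- joint compatibility of a family of elements together with `lam`. -/
def compatFam {ι : Type} {Θ : ι → F.Frame} {Λ : F.Frame}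
    (θ : ∀ i, F.El (Θ i)) (lam : F.El Λ) : Prop :=
  ∃ (Ξ : F.Frame) (hΘ : ∀ i, F.le (Θ i) Ξ) (hΛ : F.le Λ Ξ) (x : F.El Ξ),
    (∀ i, x ∈ F.τ (hΘ i) (θ i)) ∧ x ∈ F.τ hΛ lam

/-- `⊥ {Θ_i : i ∈ ι} | Λ` : conditional independence of a family of frames given `Λ`,
`R_λ(Θ₁,…,Θₙ) = R_λ(Θ₁) × ⋯ × R_λ(Θₙ)` for every `λ ∈ Λ`. -/
def CondIndepFam {ι : Type} (Θ : ι → F.Frame) (Λ : F.Frame) : Prop :=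
  ∀ (lam : F.El Λ) (θ : ∀ i, F.El (Θ i)),
    F.compatFam θ lam ↔ ∀ i, F.compat (θ i) lam

/-- `t_Λ(x)`, the unique element of the coarsening `Λ` whose block contains `x`. -/
noncomputable def proj {Λ Θ : F.Frame} (h : F.le Λ Θ) (x : F.El Θ) : F.El Λ :=
  (F.τ_cover h x).choose

/-- probability potentials on the frame `Θ` -/
abbrev Pot (Θ : F.Frame) : Type := F.El Θ → ℝ≥0

/-- the combination of two probability potentials, on the join of their domains -/
noncomputable def combine {Θ₁ Θ₂ : F.Frame} (p₁ : F.Pot Θ₁) (p₂ : F.Pot Θ₂) :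
    F.Pot (F.sup Θ₁ Θ₂) :=
  fun x => p₁ (F.proj (F.le_sup_left Θ₁ Θ₂) x) * p₂ (F.proj (F.le_sup_right Θ₁ Θ₂) x)

/-- the transport `π_Λ(p)` of a probability potential to the frame `Λ` -/
noncomputable def transport {Θ : F.Frame} (p : F.Pot Θ) (Λ : F.Frame) : F.Pot Λ :=
  fun lam => ∑ᶠ (θ : F.El Θ) (_ : F.compat θ lam), p θ

/-- the max-transport `t^max_Λ(p)` of a probability potential to the frame `Λ` -/
noncomputable def maxTransport {Θ : F.Frame} (p : F.Pot Θ) (Λ : F.Frame) : F.Pot Λ :=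
  fun lam => ⨆ (θ : F.El Θ) (_ : F.compat θ lam), p θ

/-- combination of two set potentials, on the join of their domains -/
noncomputable def setCombine {Θ₁ Θ₂ : F.Frame} (m₁ : Set (F.El Θ₁) → ℝ≥0)
    (m₂ : Set (F.El Θ₂) → ℝ≥0) : Set (F.El (F.sup Θ₁ Θ₂)) → ℝ≥0 :=
  fun S => ∑ᶠ (S₁ : Set (F.El Θ₁)) (S₂ : Set (F.El Θ₂))
    (_ : (⋃ θ ∈ S₁, F.τ (F.le_sup_left Θ₁ Θ₂) θ) ∩
         (⋃ θ ∈ S₂, F.τ (F.le_sup_right Θ₁ Θ₂) θ) = S),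
    m₁ S₁ * m₂ S₂

/-- the conditional `p_{Θ|Λ} = π_Θ(p) · (π_Λ(p))⁻¹` of `p` for `Θ` given `Λ ≤ Θ` -/
noncomputable def condl {Δ : F.Frame} (p : F.Pot Δ) {Λ Θ : F.Frame} (h : F.le Λ Θ) :
    F.Pot Θ :=
  fun θ => F.transport p Θ θ * (F.transport p Λ (F.proj h θ))⁻¹

/-- the conditional `p_{Θ|Λ} = π_{Θ∨Λ}(p) · (π_Λ(p))⁻¹` of `p` for arbitrary `Θ` given `Λ` -/
noncomputable def condl2 {Δ : F.Frame} (p : F.Pot Δ) (Θ Λ : F.Frame) :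
    F.Pot (F.sup Θ Λ) :=
  fun x => F.transport p (F.sup Θ Λ) x *
    (F.transport p Λ (F.proj (F.le_sup_right Θ Λ) x))⁻¹

/-- the solution set `s_p^Λ(lam)`: maximizers of `p` among elements compatible with `lam` -/
noncomputable def solSet {Θ : F.Frame} (p : F.Pot Θ) (Λ : F.Frame) (lam : F.El Λ) :
    Set (F.El Θ) :=
  {θ | F.compat θ lam ∧ p θ = F.maxTransport p Λ lam}

end FCF

/-!
For a coarsening `Λ ≤ Θ`, `θ ∼ λ` just means `t_Λ(θ) = λ`, so `π_Λ` sums over the fibres of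
`t_Λ`. Two facts follow: transports along a chain `Λ ≤ Θ ≤ Δ` compose, and `π_Λ` is
`Λ`-linear (a factor depending only on `t_Λ(θ)` pulls out). Since `p_{Θ|Λ}` is `π_Θ(p)` times
such a factor, all six properties reduce to `x · x⁻¹ = f(x)` in `ℝ≥0`, together with
`π_Θ(p)(θ) ≤ π_Λ(p)(t_Λ(θ))` for the vanishing case of the chain rule (3).
-/

namespace FCF

variable {F : FCF}

lemma mem_τ_proj {Λ Θ : F.Frame} (h : F.le Λ Θ) (x : F.El Θ) : x ∈ F.τ h (F.proj h x) :=
  (F.τ_cover h x).choose_spec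

lemma proj_eq_of_mem {Λ Θ : F.Frame} (h : F.le Λ Θ) {x : F.El Θ} {lam : F.El Λ}
    (hx : x ∈ F.τ h lam) : F.proj h x = lam := by
  by_contra hne
  have hx' : x ∈ F.τ h (F.proj h x) ∩ F.τ h lam := ⟨mem_τ_proj h x, hx⟩
  rwa [F.τ_disjoint h _ _ hne] at hx'

lemma proj_refl {Θ : F.Frame} (h : F.le Θ Θ) (x : F.El Θ) : F.proj h x = x :=
  proj_eq_of_mem h (by rw [F.τ_refl h x]; rfl)

lemma proj_proj {Λ₂ Λ₁ Θ : F.Frame} (h21 : F.le Λ₂ Λ₁) (h1Θ : F.le Λ₁ Θ) (h2Θ : F.le Λ₂ Θ)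
    (x : F.El Θ) : F.proj h21 (F.proj h1Θ x) = F.proj h2Θ x := by
  refine (proj_eq_of_mem h2Θ ?_).symm
  rw [F.τ_comp h21 h1Θ h2Θ]
  exact Set.mem_biUnion (mem_τ_proj h21 _) (mem_τ_proj h1Θ x)

lemma compat_iff_proj_eq {Λ Θ : F.Frame} (h : F.le Λ Θ) (θ : F.El Θ) (lam : F.El Λ) :
    F.compat θ lam ↔ F.proj h θ = lam := by
  have hΘ := F.le_sup_left Θ Λ
  constructor
  · rintro ⟨y, hyθ, hylam⟩
    rw [F.τ_comp h hΘ (F.le_sup_right Θ Λ) lam] at hylam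
    obtain ⟨θ', hθ', hy⟩ := Set.mem_iUnion₂.1 hylam
    have hθθ' : θ' = θ := (proj_eq_of_mem hΘ hy).symm.trans (proj_eq_of_mem hΘ hyθ)
    exact proj_eq_of_mem h (hθθ' ▸ hθ')
  · rintro rfl
    obtain ⟨y, hy⟩ := F.τ_nonempty hΘ θ
    refine ⟨y, hy, ?_⟩
    rw [F.τ_comp h hΘ (F.le_sup_right Θ Λ)]
    exact Set.mem_biUnion (mem_τ_proj h θ) hy

lemma transport_eq_sum {Λ Θ : F.Frame} [DecidableEq (F.El Λ)] (h : F.le Λ Θ) (p : F.Pot Θ)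
    (lam : F.El Λ) :
    F.transport p Λ lam = ∑ θ with F.proj h θ = lam, p θ := by
  rw [transport, Finset.sum_filter, ← finsum_eq_sum_of_fintype]
  simp only [finsum_eq_if, compat_iff_proj_eq h]

lemma transport_self {Θ : F.Frame} (p : F.Pot Θ) : F.transport p Θ = p := by
  funext θ
  classical
  simp [transport_eq_sum (F.le_refl Θ), proj_refl, Finset.sum_filter]

lemma transport_transport {Λ Θ Δ : F.Frame} (hΛΘ : F.le Λ Θ) (hΘΔ : F.le Θ Δ) (p : F.Pot Δ) :
    F.transport (F.transport p Θ) Λ = F.transport p Λ := by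
  funext lam
  let _ := Classical.decEq (F.El Λ)
  let _ := Classical.decEq (F.El Θ)
  rw [transport_eq_sum hΛΘ, transport_eq_sum (F.le_trans hΛΘ hΘΔ)]
  simp only [transport_eq_sum hΘΔ]
  rw [Finset.sum_fiberwise_eq_sum_filter]
  simp only [Finset.mem_filter, Finset.mem_univ, true_and, proj_proj hΛΘ hΘΔ (F.le_trans hΛΘ hΘΔ)]

lemma transport_mul_proj {Λ Θ : F.Frame} (h : F.le Λ Θ) (q : F.Pot Θ) (r : F.Pot Λ) :
    F.transport (fun θ => q θ * r (F.proj h θ)) Λ = fun lam => F.transport q Λ lam * r lam := by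
  funext lam
  classical
  rw [transport_eq_sum h, transport_eq_sum h, Finset.sum_mul]
  refine Finset.sum_congr rfl fun θ hθ => ?_
  rw [(Finset.mem_filter.1 hθ).2]

lemma transport_le_transport_proj {Λ Θ Δ : F.Frame} (hΛΘ : F.le Λ Θ) (hΘΔ : F.le Θ Δ)
    (p : F.Pot Δ) (θ : F.El Θ) :
    F.transport p Θ θ ≤ F.transport p Λ (F.proj hΛΘ θ) := by
  classical
  rw [← transport_transport hΛΘ hΘΔ, transport_eq_sum hΛΘ]
  exact Finset.single_le_sum (fun _ _ => zero_le) (by simp)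

lemma mul_inv_self_eq_fpot {X : Type} (p : X → ℝ≥0) (x : X) : p x * (p x)⁻¹ = fpot p x := by
  rcases eq_or_ne (p x) 0 with h | h <;> simp [fpot, h, pos_iff_ne_zero]

lemma fpot_mul_fpot_of_pos_imp {X Y : Type} {p : X → ℝ≥0} {q : Y → ℝ≥0} {x : X} {y : Y}
    (h : 0 < q y → 0 < p x) : fpot p x * fpot q y = fpot q y := by
  by_cases hq : 0 < q y <;> simp [fpot, hq, h]

section Conditional

variable {Δ : F.Frame} (p : F.Pot Δ)

lemma transport_proj_pos_of_condl_pos {Λ Θ : F.Frame} (h : F.le Λ Θ) {θ : F.El Θ}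
    (hθ : 0 < F.condl p h θ) : 0 < F.transport p Λ (F.proj h θ) := by
  refine pos_iff_ne_zero.2 fun h0 => hθ.ne' ?_
  simp [condl, h0]

lemma condl_trans {Θ Λ₁ Λ₂ : F.Frame} (hΘΔ : F.le Θ Δ) (h21 : F.le Λ₂ Λ₁) (h1Θ : F.le Λ₁ Θ) :
    F.condl p (F.le_trans h21 h1Θ) = fun θ => F.condl p h1Θ θ * F.condl p h21 (F.proj h1Θ θ) := by
  funext θ
  simp only [condl, proj_proj h21 h1Θ (F.le_trans h21 h1Θ)]
  rcases eq_or_ne (F.transport p Λ₁ (F.proj h1Θ θ)) 0 with h0 | h0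
  · have hθ : F.transport p Θ θ = 0 :=
      le_zero_iff.1 (h0 ▸ transport_le_transport_proj h1Θ hΘΔ p θ)
    simp [hθ]
  · rw [mul_assoc, inv_mul_cancel_left₀ h0]

lemma transport_condl {Θ Θ₁ Λ : F.Frame} (hΘΔ : F.le Θ Δ) (hΛΘ : F.le Λ Θ) (hΛΘ₁ : F.le Λ Θ₁)
    (hΘ₁Θ : F.le Θ₁ Θ) : F.transport (F.condl p hΛΘ) Θ₁ = F.condl p hΛΘ₁ := by
  have hcondl : F.condl p hΛΘ = fun θ =>
      F.transport p Θ θ * (fun θ₁ => (F.transport p Λ (F.proj hΛΘ₁ θ₁))⁻¹) (F.proj hΘ₁Θ θ) := by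
    funext θ
    rw [condl, ← proj_proj hΛΘ₁ hΘ₁Θ hΛΘ]
  rw [hcondl]
  refine (transport_mul_proj hΘ₁Θ (F.transport p Θ)
    fun θ₁ => (F.transport p Λ (F.proj hΛΘ₁ θ₁))⁻¹).trans ?_
  rw [transport_transport hΘ₁Θ hΘΔ]
  rfl

lemma transport_condl_self {Θ Λ : F.Frame} (hΘΔ : F.le Θ Δ) (hΛΘ : F.le Λ Θ) :
    F.transport (F.condl p hΛΘ) Λ = fpot (F.transport p Λ) := by
  funext lam
  rw [transport_condl p hΘΔ hΛΘ (F.le_refl Λ) hΛΘ, condl, proj_refl, mul_inv_self_eq_fpot]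

lemma condl_transport_mul {Θ Λ : F.Frame} (hΘΔ : F.le Θ Δ) (hΛΘ : F.le Λ Θ) (r : F.Pot Λ) :
    F.condl (fun θ => F.transport p Θ θ * r (F.proj hΛΘ θ)) hΛΘ =
      fun θ => F.condl p hΛΘ θ * fpot r (F.proj hΛΘ θ) := by
  funext θ
  rw [condl, condl, transport_self, transport_mul_proj, transport_transport hΛΘ hΘΔ,
    ← mul_inv_self_eq_fpot, mul_inv]
  exact mul_mul_mul_comm _ _ _ _

end Conditional

/-- Basic properties of conditionals `p_{Θ|Λ}` for `Λ ≤ Θ ≤ d(p)`. -/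
theorem condl_props (F : FCF) (Δ Θ Λ : F.Frame)
    (hΛΘ : F.le Λ Θ) (hΘΔ : F.le Θ Δ) (p : F.Pot Δ) :
    -- (1) `[π_Λ(p)] ≤ [p_{Θ|Λ}]`
    ((fun θ => fpot (F.transport p Λ) (F.proj hΛΘ θ) * fpot (F.condl p hΛΘ) θ) =
      fpot (F.condl p hΛΘ)) ∧
    -- (2) `π_Λ(p_{Θ|Λ}) = f_{π_Λ(p)}`
    (F.transport (F.condl p hΛΘ) Λ = fpot (F.transport p Λ)) ∧
    -- (3) if `Λ₂ ≤ Λ₁ ≤ Θ` then `p_{Θ|Λ₂} = p_{Θ|Λ₁} · p_{Λ₁|Λ₂}`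
    (∀ (Λ₁ Λ₂ : F.Frame) (h21 : F.le Λ₂ Λ₁) (h1Θ : F.le Λ₁ Θ),
      F.condl p (F.le_trans h21 h1Θ) =
        fun θ => F.condl p h1Θ θ * F.condl p h21 (F.proj h1Θ θ)) ∧
    -- (4) if `Λ ≤ Θ₁ ≤ Θ` then `π_{Θ₁}(p_{Θ|Λ}) = p_{Θ₁|Λ}`
    (∀ (Θ₁ : F.Frame) (hΛΘ₁ : F.le Λ Θ₁) (hΘ₁Θ : F.le Θ₁ Θ),
      F.transport (F.condl p hΛΘ) Θ₁ = F.condl p hΛΘ₁) ∧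
    -- (5) if `Θ₁ ≤ Λ₁, Λ₂ ≤ Θ` then `π_{Λ₁}(p_{Θ|Λ₂} · p_{Λ₂|Θ₁}) = p_{Λ₁|Θ₁}`
    (∀ (Θ₁ Λ₁ Λ₂ : F.Frame) (h11 : F.le Θ₁ Λ₁) (h12 : F.le Θ₁ Λ₂)
        (h1Θ : F.le Λ₁ Θ) (h2Θ : F.le Λ₂ Θ),
      F.transport (fun θ => F.condl p h2Θ θ * F.condl p h12 (F.proj h2Θ θ)) Λ₁ =
        F.condl p h11) ∧
    -- (6) if `d(p₂) = Λ` and `Θ ≤ d(p₁)` then `(π_Θ(p₁) · p₂)_{Θ|Λ} = p₁_{Θ|Λ} · f_{p₂}`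
    (∀ (Δ' : F.Frame) (p₁ : F.Pot Δ') (hΘΔ' : F.le Θ Δ') (p₂ : F.Pot Λ),
      F.condl (fun θ => F.transport p₁ Θ θ * p₂ (F.proj hΛΘ θ)) hΛΘ =
        fun θ => F.condl p₁ hΛΘ θ * fpot p₂ (F.proj hΛΘ θ)) := by
  refine ⟨?_, transport_condl_self p hΘΔ hΛΘ, fun _ _ h21 h1Θ => condl_trans p hΘΔ h21 h1Θ,
    fun _ hΛΘ₁ hΘ₁Θ => transport_condl p hΘΔ hΛΘ hΛΘ₁ hΘ₁Θ, ?_,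
    fun _ p₁ hΘΔ' p₂ => condl_transport_mul p₁ hΘΔ' hΛΘ p₂⟩
  · funext θ
    exact fpot_mul_fpot_of_pos_imp (transport_proj_pos_of_condl_pos p hΛΘ)
  · intro Θ₁ Λ₁ Λ₂ h11 h12 h1Θ h2Θ
    rw [← condl_trans p hΘΔ h12 h2Θ]
    exact transport_condl p hΘΔ (F.le_trans h12 h2Θ) h11 h1Θ

end FCF
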